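/- arXiv:2106.06572 — 3 statements merged into one kernel-verified Lean document; each statement's English description precedes it below -/
import Mathlib

section
/- Let α = (a_n)_{n∈ℤ} ∈ {1,2}^ℤ and let j, k ≥ 0 be integers. Then λ0(α) ≤ [a0; a1,…,a_j, t_j] + [0; a−1,…,a−k, s_k], where the periodic tail t_j equals overline{1,2} (infinite repetition of 1,2) if j is even and overline{2,1} if j is odd, and s_k equals overline{1,2} if k is even and overline{2,1} if k is odd. Likewise λ0(α) ≥ [a0; a1,…,a_j, t'_j] + [0; a−1,…,a−k, s'_k], where t'_j equals overline{2,1} if j is even and overline{1,2} if j is odd, and s'_k equals overline{2,1} if k is even and overline{1,2} if k is odd. -/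
open Filter

/-- Numerators of the convergents of the continued fraction `[a 0; a 1, a 2, …]`. -/
def cfNum (a : ℕ → ℕ) : ℕ → ℕ
  | 0 => a 0
  | 1 => a 1 * a 0 + 1
  | n + 2 => a (n + 2) * cfNum a (n + 1) + cfNum a n

/-- Denominators of the convergents of the continued fraction `[a 0; a 1, a 2, …]`. -/
def cfDen (a : ℕ → ℕ) : ℕ → ℕ
  | 0 => 1
  | 1 => a 1
  | n + 2 => a (n + 2) * cfDen a (n + 1) + cfDen a n

/-- Value of the infinite continued fraction `[a 0; a 1, a 2, …]` (the limit of its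
convergents). -/
noncomputable def cfVal (a : ℕ → ℕ) : ℝ :=
  limUnder atTop fun n => (cfNum a n : ℝ) / (cfDen a n)

/-- Value of the infinite continued fraction `[0; a 0, a 1, …]`. -/
noncomputable def cf01 (a : ℕ → ℕ) : ℝ := 1 / cfVal a

/-- `λ₀(α) = [α 0; α 1, α 2, …] + [0; α (-1), α (-2), …]`. -/
noncomputable def lambda0 (α : ℤ → ℕ) : ℝ :=
  cfVal (fun n : ℕ => α (n : ℤ)) + cf01 (fun n : ℕ => α (-((n : ℤ) + 1)))

/-- The shift `σ^N` on bi-infinite sequences. -/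
def shiftZ (N : ℤ) (α : ℤ → ℕ) : ℤ → ℕ := fun i => α (i + N)

/-- The Markov value `m(α) = sup_{n ∈ ℤ} λ₀(σⁿ α)`. -/
noncomputable def markovValue (α : ℤ → ℕ) : ℝ := ⨆ n : ℤ, lambda0 (shiftZ n α)

/-- The Lagrange value `ℓ(α) = limsup_{n → +∞} λ₀(σⁿ α)`. -/
noncomputable def lagrangeValue (α : ℤ → ℕ) : ℝ :=
  limsup (fun n : ℕ => lambda0 (shiftZ (n : ℤ) α)) atTop

/-- The Markov spectrum `M`. -/
def MarkovSpectrum : Set ℝ :=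
  { x | ∃ α : ℤ → ℕ, (∀ i, 1 ≤ α i) ∧ markovValue α = x }

/-- The Lagrange spectrum `L`. -/
def LagrangeSpectrum : Set ℝ :=
  { x | ∃ α : ℤ → ℕ, (∀ i, 1 ≤ α i) ∧ lagrangeValue α = x }

/-- The periodic sequence `1,2,1,2,…` (i.e. `overline{1,2}`). -/
def per12 : ℕ → ℕ := fun n => if n % 2 = 0 then 1 else 2

/-- The periodic sequence `2,1,2,1,…` (i.e. `overline{2,1}`). -/
def per21 : ℕ → ℕ := fun n => if n % 2 = 0 then 2 else 1

/-- The one-sided sequence `a 0, a 1, …, a j, t 0, t 1, …`, i.e. the partial quotients of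
`[a 0; a 1, …, a j, t]`. -/
def withTailPos (α : ℤ → ℕ) (j : ℕ) (t : ℕ → ℕ) : ℕ → ℕ :=
  fun n => if n ≤ j then α (n : ℤ) else t (n - (j + 1))

/-- The one-sided sequence `a (-1), a (-2), …, a (-k), s 0, s 1, …`, i.e. the partial
quotients of `[0; a₋₁, …, a₋ₖ, s]` (after the leading `0`). -/
def withTailNeg (α : ℤ → ℕ) (k : ℕ) (s : ℕ → ℕ) : ℕ → ℕ :=
  fun n => if n < k then α (-((n : ℤ) + 1)) else s (n - k)

/-! ### Auxiliary lemmas -/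

/-- Finite continued fraction value `[a 0; a 1, …, a n]`. -/
noncomputable def fcf : ℕ → (ℕ → ℕ) → ℝ
  | 0, a => a 0
  | n + 1, a => a 0 + 1 / fcf n (fun i => a (i + 1))

lemma one_le_fcf : ∀ (n : ℕ) (a : ℕ → ℕ), (∀ i, 1 ≤ a i) → 1 ≤ fcf n a := by
  intro n
  induction n with
  | zero => intro a ha; show (1 : ℝ) ≤ (a 0 : ℝ); exact_mod_cast ha 0
  | succ n ih =>
    intro a ha
    have h1 : (1 : ℝ) ≤ fcf n (fun i => a (i + 1)) := ih _ (fun i => ha (i + 1))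
    have h2 : (0 : ℝ) < 1 / fcf n (fun i => a (i + 1)) := by positivity
    have h3 : (1 : ℝ) ≤ (a 0 : ℝ) := by exact_mod_cast ha 0
    simp only [fcf]
    linarith

lemma fcf_le_fcf : ∀ (n : ℕ) (a b : ℕ → ℕ), (∀ i, 1 ≤ a i) → (∀ i, 1 ≤ b i) →
    (∀ m, (m % 2 = 0 → a m ≤ b m) ∧ (m % 2 = 1 → b m ≤ a m)) → fcf n a ≤ fcf n b := by
  intro n
  induction n with
  | zero =>
    intro a b _ _ h
    show ((a 0 : ℝ)) ≤ (b 0 : ℝ)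
    exact_mod_cast (h 0).1 rfl
  | succ n ih =>
    intro a b ha hb h
    have hab0 : (a 0 : ℝ) ≤ b 0 := by exact_mod_cast (h 0).1 rfl
    have key : fcf n (fun i => b (i + 1)) ≤ fcf n (fun i => a (i + 1)) := by
      apply ih _ _ (fun i => hb (i + 1)) (fun i => ha (i + 1))
      intro m
      constructor
      · intro hm; exact (h (m + 1)).2 (by omega)
      · intro hm; exact (h (m + 1)).1 (by omega)
    have h1 : (1 : ℝ) ≤ fcf n (fun i => b (i + 1)) := one_le_fcf _ _ (fun i => hb (i + 1))
    have h2 : (1 : ℝ) ≤ fcf n (fun i => a (i + 1)) := one_le_fcf _ _ (fun i => ha (i + 1))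
    simp only [fcf]
    have : 1 / fcf n (fun i => a (i + 1)) ≤ 1 / fcf n (fun i => b (i + 1)) :=
      one_div_le_one_div_of_le (by linarith) key
    linarith

lemma cf_shift (a : ℕ → ℕ) : ∀ n : ℕ,
    cfNum a (n + 1) = a 0 * cfNum (fun i => a (i + 1)) n + cfDen (fun i => a (i + 1)) n ∧
    cfDen a (n + 1) = cfNum (fun i => a (i + 1)) n := by
  intro n
  induction n using Nat.twoStepInduction with
  | zero => simp [cfNum, cfDen]; ring
  | one =>
    refine ⟨?_, ?_⟩ <;> simp [cfNum, cfDen] <;> ring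
  | more n ih1 ih2 =>
    obtain ⟨e1, e2⟩ := ih1
    obtain ⟨e3, e4⟩ := ih2
    constructor
    · show a (n + 3) * cfNum a (n + 2) + cfNum a (n + 1) = _
      rw [e1, e3]
      show _ = a 0 * (a (n + 3) * cfNum _ (n + 1) + cfNum _ n) +
        (a (n + 3) * cfDen _ (n + 1) + cfDen _ n)
      ring
    · show a (n + 3) * cfDen a (n + 2) + cfDen a (n + 1) = _
      rw [e2, e4]
      rfl

lemma one_le_cfNum (a : ℕ → ℕ) (ha : ∀ i, 1 ≤ a i) : ∀ n, 1 ≤ cfNum a n := by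
  intro n
  induction n using Nat.twoStepInduction with
  | zero => exact ha 0
  | one => simp [cfNum]
  | more n ih1 ih2 =>
    show 1 ≤ a (n + 2) * cfNum a (n + 1) + cfNum a n
    nlinarith [ha (n + 2)]

lemma one_le_cfDen (a : ℕ → ℕ) (ha : ∀ i, 1 ≤ a i) : ∀ n, 1 ≤ cfDen a n := by
  intro n
  induction n using Nat.twoStepInduction with
  | zero => exact le_refl 1
  | one => exact ha 1
  | more n ih1 ih2 =>
    show 1 ≤ a (n + 2) * cfDen a (n + 1) + cfDen a n
    nlinarith [ha (n + 2)]

lemma fcf_eq : ∀ (n : ℕ) (a : ℕ → ℕ), (∀ i, 1 ≤ a i) →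
    fcf n a = (cfNum a n : ℝ) / (cfDen a n) := by
  intro n
  induction n with
  | zero => intro a ha; simp [fcf, cfNum, cfDen]
  | succ n ih =>
    intro a ha
    have ha' : ∀ i, 1 ≤ (fun i => a (i + 1)) i := fun i => ha (i + 1)
    have hN : 1 ≤ cfNum (fun i => a (i + 1)) n := one_le_cfNum _ ha' n
    have hD : 1 ≤ cfDen (fun i => a (i + 1)) n := one_le_cfDen _ ha' n
    have hNr : (0 : ℝ) < cfNum (fun i => a (i + 1)) n := by exact_mod_cast hN
    have hDr : (0 : ℝ) < cfDen (fun i => a (i + 1)) n := by exact_mod_cast hD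
    obtain ⟨e1, e2⟩ := cf_shift a n
    rw [show fcf (n + 1) a = a 0 + 1 / fcf n (fun i => a (i + 1)) from rfl,
      ih _ ha', e1, e2]
    have hNne : (cfNum (fun i => a (i + 1)) n : ℝ) ≠ 0 := ne_of_gt hNr
    have hDne : (cfDen (fun i => a (i + 1)) n : ℝ) ≠ 0 := ne_of_gt hDr
    push_cast
    rw [one_div_div, add_div' _ _ _ hNne]

lemma cf_det (a : ℕ → ℕ) : ∀ n : ℕ,
    (cfNum a (n + 1) : ℤ) * cfDen a n - cfNum a n * cfDen a (n + 1) = (-1) ^ n := by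
  intro n
  induction n with
  | zero => simp [cfNum, cfDen]; push_cast; ring
  | succ n ih =>
    have e1 : (cfNum a (n + 2) : ℤ) = a (n + 2) * cfNum a (n + 1) + cfNum a n := by
      push_cast [cfNum]; try ring
    have e2 : (cfDen a (n + 2) : ℤ) = a (n + 2) * cfDen a (n + 1) + cfDen a n := by
      push_cast [cfDen]; try ring
    rw [e1, e2]
    have : (-1 : ℤ) ^ (n + 1) = -(-1) ^ n := by ring
    rw [this, ← ih]
    ring

lemma cfDen_growth (a : ℕ → ℕ) (ha : ∀ i, 1 ≤ a i) : ∀ n, 2 ^ (n / 2) ≤ cfDen a n := by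
  intro n
  induction n using Nat.twoStepInduction with
  | zero => simp [cfDen]
  | one => simpa [cfDen] using ha 1
  | more n ih1 ih2 =>
    show 2 ^ ((n + 2) / 2) ≤ a (n + 2) * cfDen a (n + 1) + cfDen a n
    have h1 : cfDen a (n + 1) ≤ a (n + 2) * cfDen a (n + 1) :=
      Nat.le_mul_of_pos_left _ (ha (n + 2))
    have h2 : 2 ^ (n / 2) ≤ cfDen a (n + 1) :=
      le_trans (Nat.pow_le_pow_right (by norm_num) (by omega)) ih2
    have : (n + 2) / 2 = n / 2 + 1 := by omega
    rw [this, pow_succ]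
    omega

lemma cfVal_tendsto (a : ℕ → ℕ) (ha : ∀ i, 1 ≤ a i) :
    Tendsto (fun n => (cfNum a n : ℝ) / (cfDen a n)) atTop (nhds (cfVal a)) := by
  have hcauchy : CauchySeq (fun n => (cfNum a n : ℝ) / (cfDen a n)) := by
    apply cauchySeq_of_dist_le_of_summable (fun n => (1 / 2) ^ n) _ summable_geometric_two
    intro n
    have hD1 : (0 : ℝ) < cfDen a n := by exact_mod_cast one_le_cfDen a ha n
    have hD2 : (0 : ℝ) < cfDen a (n + 1) := by exact_mod_cast one_le_cfDen a ha (n + 1)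
    have hdet : (cfNum a (n + 1) : ℝ) * cfDen a n - cfNum a n * cfDen a (n + 1) = (-1) ^ n := by
      exact_mod_cast congrArg (fun z : ℤ => (z : ℝ)) (cf_det a n)
    have hdiff : (cfNum a n : ℝ) / cfDen a n - cfNum a (n + 1) / cfDen a (n + 1)
        = (-(-1) ^ n) / (cfDen a n * cfDen a (n + 1)) := by
      field_simp
      linarith [hdet]
    rw [Real.dist_eq, hdiff, abs_div, abs_neg, abs_pow, abs_neg, abs_one, one_pow, one_div]
    rw [abs_of_pos (by positivity)]
    have hgrow : (2 : ℝ) ^ n ≤ cfDen a n * cfDen a (n + 1) := by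
      have g1 : (2 : ℕ) ^ (n / 2) ≤ cfDen a n := cfDen_growth a ha n
      have g2 : (2 : ℕ) ^ ((n + 1) / 2) ≤ cfDen a (n + 1) := cfDen_growth a ha (n + 1)
      have : (2 : ℕ) ^ n ≤ cfDen a n * cfDen a (n + 1) := by
        calc (2 : ℕ) ^ n = 2 ^ (n / 2) * 2 ^ ((n + 1) / 2) := by
              rw [← pow_add]; congr 1; omega
        _ ≤ _ := Nat.mul_le_mul g1 g2
      exact_mod_cast this
    show (_ : ℝ)⁻¹ ≤ (1 / 2 : ℝ) ^ n
    rw [one_div, inv_pow]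
    exact inv_anti₀ (by positivity) hgrow
  exact hcauchy.tendsto_limUnder

lemma one_le_cfVal (a : ℕ → ℕ) (ha : ∀ i, 1 ≤ a i) : 1 ≤ cfVal a := by
  apply ge_of_tendsto' (cfVal_tendsto a ha)
  intro n
  rw [← fcf_eq n a ha]
  exact one_le_fcf n a ha

lemma cfVal_le_cfVal (a b : ℕ → ℕ) (ha : ∀ i, 1 ≤ a i) (hb : ∀ i, 1 ≤ b i)
    (h : ∀ m, (m % 2 = 0 → a m ≤ b m) ∧ (m % 2 = 1 → b m ≤ a m)) : cfVal a ≤ cfVal b := by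
  apply le_of_tendsto_of_tendsto' (cfVal_tendsto a ha) (cfVal_tendsto b hb)
  intro n
  rw [← fcf_eq n a ha, ← fcf_eq n b hb]
  exact fcf_le_fcf n a b ha hb h

lemma cf01_le_cf01 (a b : ℕ → ℕ) (ha : ∀ i, 1 ≤ a i) (hb : ∀ i, 1 ≤ b i)
    (h : ∀ m, (m % 2 = 0 → a m ≤ b m) ∧ (m % 2 = 1 → b m ≤ a m)) : cf01 b ≤ cf01 a := by
  unfold cf01
  exact one_div_le_one_div_of_le (by linarith [one_le_cfVal a ha]) (cfVal_le_cfVal a b ha hb h)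

lemma per_tail (j n : ℕ) :
    (if j % 2 = 0 then per12 else per21) n = if (j + n) % 2 = 0 then 1 else 2 := by
  by_cases h : j % 2 = 0 <;> simp only [h, if_pos, if_neg, per12, per21, ite_true, ite_false] <;>
    split_ifs <;> omega

lemma per_tail' (j n : ℕ) :
    (if j % 2 = 0 then per21 else per12) n = if (j + n) % 2 = 0 then 2 else 1 := by
  by_cases h : j % 2 = 0 <;> simp only [h, if_pos, if_neg, per12, per21, ite_true, ite_false] <;>
    split_ifs <;> omega

/-- For `α ∈ {1,2}^ℤ` and `j, k ≥ 0`: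
`λ₀(α) ≤ [a₀; a₁,…,a_j, t_j] + [0; a₋₁,…,a₋ₖ, s_k]`, where `t_j = overline{1,2}` if `j` is
even and `overline{2,1}` if `j` is odd, and similarly for `s_k`; and
`λ₀(α) ≥ [a₀; a₁,…,a_j, t'_j] + [0; a₋₁,…,a₋ₖ, s'_k]` with the opposite choices of tails. -/
theorem lambda0_cf_tail_bounds (α : ℤ → ℕ) (hα : ∀ i, α i = 1 ∨ α i = 2) (j k : ℕ) :
    lambda0 α ≤
      cfVal (withTailPos α j (if j % 2 = 0 then per12 else per21)) +
        cf01 (withTailNeg α k (if k % 2 = 0 then per12 else per21)) ∧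
    cfVal (withTailPos α j (if j % 2 = 0 then per21 else per12)) +
        cf01 (withTailNeg α k (if k % 2 = 0 then per21 else per12)) ≤ lambda0 α := by
  have hA : ∀ i : ℕ, 1 ≤ (fun n : ℕ => α (n : ℤ)) i := by
    intro i; show 1 ≤ α (i : ℤ); rcases hα (i : ℤ) with h | h <;> rw [h] <;> norm_num
  have hB : ∀ i : ℕ, 1 ≤ (fun n : ℕ => α (-((n : ℤ) + 1))) i := by
    intro i; show 1 ≤ α (-((i : ℤ) + 1))
    rcases hα (-((i : ℤ) + 1)) with h | h <;> rw [h] <;> norm_num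
  have hP1 : ∀ i, 1 ≤ withTailPos α j (if j % 2 = 0 then per12 else per21) i := by
    intro i
    by_cases hi : i ≤ j
    · simp only [withTailPos, if_pos hi]; exact hA i
    · simp only [withTailPos, if_neg hi, per_tail]; split_ifs <;> omega
  have hP2 : ∀ i, 1 ≤ withTailPos α j (if j % 2 = 0 then per21 else per12) i := by
    intro i
    by_cases hi : i ≤ j
    · simp only [withTailPos, if_pos hi]; exact hA i
    · simp only [withTailPos, if_neg hi, per_tail']; split_ifs <;> omega
  have hN1 : ∀ i, 1 ≤ withTailNeg α k (if k % 2 = 0 then per12 else per21) i := by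
    intro i
    by_cases hi : i < k
    · simp only [withTailNeg, if_pos hi]; exact hB i
    · simp only [withTailNeg, if_neg hi, per_tail]; split_ifs <;> omega
  have hN2 : ∀ i, 1 ≤ withTailNeg α k (if k % 2 = 0 then per21 else per12) i := by
    intro i
    by_cases hi : i < k
    · simp only [withTailNeg, if_pos hi]; exact hB i
    · simp only [withTailNeg, if_neg hi, per_tail']; split_ifs <;> omega
  constructor
  · show cfVal _ + cf01 _ ≤ _
    apply add_le_add
    · apply cfVal_le_cfVal _ _ hA hP1
      intro m
      by_cases hm : m ≤ j
      · simp only [withTailPos, if_pos hm]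
        exact ⟨fun _ => le_refl _, fun _ => le_refl _⟩
      · simp only [withTailPos, if_neg hm, per_tail]
        rcases hα (m : ℤ) with h1 | h1 <;> rw [h1] <;>
          constructor <;> intro hp <;> split_ifs <;> omega
    · apply cf01_le_cf01 _ _ hN1 hB
      intro m
      by_cases hm : m < k
      · simp only [withTailNeg, if_pos hm]
        exact ⟨fun _ => le_refl _, fun _ => le_refl _⟩
      · simp only [withTailNeg, if_neg hm, per_tail]
        rcases hα (-((m : ℤ) + 1)) with h1 | h1 <;> rw [h1] <;>
          constructor <;> intro hp <;> split_ifs <;> omega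
  · show _ ≤ cfVal _ + cf01 _
    apply add_le_add
    · apply cfVal_le_cfVal _ _ hP2 hA
      intro m
      by_cases hm : m ≤ j
      · simp only [withTailPos, if_pos hm]
        exact ⟨fun _ => le_refl _, fun _ => le_refl _⟩
      · simp only [withTailPos, if_neg hm, per_tail']
        rcases hα (m : ℤ) with h1 | h1 <;> rw [h1] <;>
          constructor <;> intro hp <;> split_ifs <;> omega
    · apply cf01_le_cf01 _ _ hB hN2
      intro m
      by_cases hm : m < k
      · simp only [withTailNeg, if_pos hm]
        exact ⟨fun _ => le_refl _, fun _ => le_refl _⟩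
      · simp only [withTailNeg, if_neg hm, per_tail']
        rcases hα (-((m : ℤ) + 1)) with h1 | h1 <;> rw [h1] <;>
          constructor <;> intro hp <;> split_ifs <;> omega
end

section
/- Fix n, m ≥ 1 and t > 0, and suppose two columns j1 and j2 of the Markov matrix M are identical, i.e. M(a^k, a^{j1}) = M(a^k, a^{j2}) for all 1 ≤ k ≤ 2^n. Then every eigenvector v ∈ ℝ^{2^n m} of the matrix B^t corresponding to a nonzero eigenvalue satisfies v_{(j1−1)m+l} = v_{(j2−1)m+l} for all 1 ≤ l ≤ m. -/
open scoped Classical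

/-- The Markov matrix associated with a set `F` of forbidden words over the alphabet
`{1,2}` (encoded as `Fin 2`, with `d` representing the digit `d + 1`):
`M(a, b) = 0` if the concatenation `ab` contains a word of `F` as a consecutive substring,
and `M(a, b) = 1` otherwise. -/
noncomputable def markovMat (n : ℕ) (F : Finset (List (Fin 2)))
    (a b : Fin n → Fin 2) : ℝ :=
  if ∃ w ∈ F, w <:+: (List.ofFn a ++ List.ofFn b) then 0 else 1

/-- The map `T_d(x) = 1/((d+1) + x)` for a digit `d : Fin 2` (representing `d + 1 ∈ {1,2}`). -/
noncomputable def Tmap (d : Fin 2) (x : ℝ) : ℝ := 1 / (((d : ℕ) : ℝ) + 1 + x)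

/-- The composition `T_a = T_{a 0} ∘ T_{a 1} ∘ … ∘ T_{a (n-1)}`. -/
noncomputable def Tcomp (n : ℕ) (a : Fin n → Fin 2) : ℝ → ℝ :=
  (List.ofFn a).foldr (fun d g => fun x => Tmap d (g x)) id

/-- The Chebyshev nodes `x_k = (1 + cos (π (2k - 1) / (2m))) / 2`, `k = 1, …, m`. -/
noncomputable def chebNode (m : ℕ) (k : Fin m) : ℝ :=
  (1 + Real.cos (Real.pi * (2 * ((k : ℕ) + 1) - 1) / (2 * m))) / 2

/-- The Lagrange interpolation polynomial `p_l(x) = ∏_{k ≠ l} (x - x_k)/(x_l - x_k)` at the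
Chebyshev nodes. -/
noncomputable def lagPoly (m : ℕ) (l : Fin m) (x : ℝ) : ℝ :=
  ∏ k ∈ Finset.univ.erase l, (x - chebNode m k) / (chebNode m l - chebNode m k)

/-- The small block `B^{j,t}(i, l) = |T'_{a^j}(x_i)|^t · p_l(T_{a^j}(x_i))`. -/
noncomputable def Bsmall (n m : ℕ) (t : ℝ) (j : Fin n → Fin 2) (i l : Fin m) : ℝ :=
  |deriv (Tcomp n j) (chebNode m i)| ^ t * lagPoly m l (Tcomp n j (chebNode m i))

/-- The matrix `B^t`, whose `(k, j)` block (rows indexed by `k`, columns by `j`) is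
`M(a^j, a^k) · B^{j,t}`; here rows and columns are indexed by pairs (word, node index). -/
noncomputable def Bt (n m : ℕ) (F : Finset (List (Fin 2))) (t : ℝ) :
    Matrix ((Fin n → Fin 2) × Fin m) ((Fin n → Fin 2) × Fin m) ℝ :=
  Matrix.of fun p q => markovMat n F q.1 p.1 * Bsmall n m t q.1 p.2 q.2

/-- If two columns `j₁`, `j₂` of the Markov matrix `M` are identical, then every eigenvector
of `B^t` with a nonzero eigenvalue has equal components in the blocks `j₁` and `j₂`. -/
theorem eigenvector_eq_of_equal_columns (n m : ℕ) (hn : 1 ≤ n) (hm : 1 ≤ m)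
    (F : Finset (List (Fin 2))) (hF : ∀ w ∈ F, w.length ≤ n + 1)
    (t : ℝ) (ht : 0 < t) (j1 j2 : Fin n → Fin 2)
    (hcol : ∀ k : Fin n → Fin 2, markovMat n F k j1 = markovMat n F k j2)
    (v : (Fin n → Fin 2) × Fin m → ℝ) (μ : ℝ) (hμ : μ ≠ 0)
    (hv : (Bt n m F t).mulVec v = μ • v) :
    ∀ l : Fin m, v (j1, l) = v (j2, l) := by
  intro l
  have h1 := congrFun hv (j1, l)
  have h2 := congrFun hv (j2, l)
  simp only [Matrix.mulVec, dotProduct, Pi.smul_apply, smul_eq_mul] at h1 h2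
  have hrow : ∀ q : (Fin n → Fin 2) × Fin m,
      Bt n m F t (j1, l) q * v q = Bt n m F t (j2, l) q * v q := by
    intro q
    simp only [Bt, Matrix.of_apply]
    rw [hcol q.1]
  have : μ * v (j1, l) = μ * v (j2, l) := by
    rw [← h1, ← h2]
    exact Finset.sum_congr rfl fun q _ => hrow q
  exact mul_left_cancel₀ hμ this
end

section
/- Let a¹ and a² be two words of length n over {1,2}, neither of which contains a forbidden word as a substring. If for every proper nonempty prefix p of a forbidden word one has: a¹ ends with p if and only if a² ends with p, then for every word b of length n over {1,2} the concatenation a¹b contains a forbidden word as a consecutive substring if and only if a²b does; equivalently, M(a¹, b) = M(a², b) for all b, i.e. the rows/columns of the Markov matrix corresponding to a¹ and a² coincide. -/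
open scoped Classical

lemma infix_append_split {α : Type*} {w x y : List α} (h : w <:+: x ++ y) :
    w <:+: x ∨ w <:+: y ∨
      ∃ s t, w = s ++ t ∧ s ≠ [] ∧ t ≠ [] ∧ s <:+ x ∧ t <+: y := by
  obtain ⟨u, v, huv⟩ := h
  by_cases hx : u.length + w.length ≤ x.length
  · left
    have hpre : (u ++ w) <+: x ++ y := ⟨v, by simpa [List.append_assoc] using huv⟩
    have : (u ++ w) <+: x :=
      List.prefix_of_prefix_length_le hpre (List.prefix_append x y)
        (by simpa using hx)
    obtain ⟨t, ht⟩ := this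
    exact ⟨u, t, by simpa [List.append_assoc] using ht⟩
  · by_cases hxu : x.length ≤ u.length
    · right; left
      have hsuf : (w ++ v) <:+ x ++ y := ⟨u, by simpa [List.append_assoc] using huv⟩
      have hlen : (w ++ v).length ≤ y.length := by
        have := congrArg List.length huv
        simp [List.length_append] at this ⊢
        omega
      have : (w ++ v) <:+ y :=
        List.suffix_of_suffix_length_le hsuf (List.suffix_append x y) hlen
      obtain ⟨t, ht⟩ := this
      exact ⟨t, v, by simpa [List.append_assoc] using ht⟩
    · right; right
      push_neg at hx hxu
      set s : List (α) := x.drop u.length with hs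
      have hdrop : w ++ v = s ++ y := by
        have := congrArg (List.drop u.length) huv
        simpa [hs, List.drop_append_of_le_length (le_of_lt hxu),
          List.drop_left' (l₁ := u), List.append_assoc] using this
      have hslen : s.length < w.length := by
        simp only [hs, List.length_drop]; omega
      have hsw : s <+: w :=
        List.prefix_of_prefix_length_le ⟨y, hdrop.symm⟩ (List.prefix_append w v)
          (le_of_lt hslen)
      obtain ⟨t, ht⟩ := hsw
      refine ⟨s, t, ht.symm, ?_, ?_, List.drop_suffix _ _, ?_⟩
      · intro h0
        have := congrArg List.length h0
        simp only [hs, List.length_drop, List.length_nil] at this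
        omega
      · intro h0
        have := congrArg List.length ht
        rw [h0] at this
        simp at this
        omega
      · have : s ++ (t ++ v) = s ++ y := by
          rw [← List.append_assoc, ht]; exact hdrop
        exact ⟨v, by exact List.append_cancel_left this⟩

lemma key (n : ℕ) (F : Finset (List (Fin 2))) (a1 a2 : Fin n → Fin 2)
    (h1 : ¬ ∃ w ∈ F, w <:+: List.ofFn a1)
    (hpre : ∀ p : List (Fin 2), (∃ w ∈ F, p ≠ [] ∧ p ≠ w ∧ p <+: w) →
      ((p <:+ List.ofFn a1) → (p <:+ List.ofFn a2)))
    (b : Fin n → Fin 2)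
    (h : ∃ w ∈ F, w <:+: (List.ofFn a1 ++ List.ofFn b)) :
    ∃ w ∈ F, w <:+: (List.ofFn a2 ++ List.ofFn b) := by
  obtain ⟨w, hwF, hw⟩ := h
  rcases infix_append_split hw with h | h | ⟨s, t, hst, hs0, ht0, hsx, hty⟩
  · exact absurd ⟨w, hwF, h⟩ h1
  · exact ⟨w, hwF, h.trans (List.suffix_append _ _).isInfix⟩
  · have hsne : s ≠ w := by
      intro h0
      apply ht0
      have := congrArg List.length hst
      rw [h0] at this
      simp at this
      exact this
    have hs2 : s <:+ List.ofFn a2 :=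
      hpre s ⟨w, hwF, hs0, hsne, ⟨t, hst.symm⟩⟩ hsx
    obtain ⟨u, hu⟩ := hs2
    obtain ⟨v, hv⟩ := hty
    exact ⟨w, hwF, ⟨u, v, by rw [hst, ← hv, ← hu]; simp [List.append_assoc]⟩⟩

/-- If two allowed words `a¹`, `a²` terminate with exactly the same proper nonempty prefixes
of forbidden words, then their rows/columns in the Markov matrix coincide. -/
theorem markovMat_row_eq_of_same_prefixes (n : ℕ) (F : Finset (List (Fin 2)))
    (hF : ∀ w ∈ F, w.length ≤ n + 1) (a1 a2 : Fin n → Fin 2)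
    (h1 : ¬ ∃ w ∈ F, w <:+: List.ofFn a1)
    (h2 : ¬ ∃ w ∈ F, w <:+: List.ofFn a2)
    (hpre : ∀ p : List (Fin 2), (∃ w ∈ F, p ≠ [] ∧ p ≠ w ∧ p <+: w) →
      ((p <:+ List.ofFn a1) ↔ (p <:+ List.ofFn a2))) :
    ∀ b : Fin n → Fin 2,
      ((∃ w ∈ F, w <:+: (List.ofFn a1 ++ List.ofFn b)) ↔
        (∃ w ∈ F, w <:+: (List.ofFn a2 ++ List.ofFn b))) ∧
      markovMat n F a1 b = markovMat n F a2 b := by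
  intro b
  have hiff : (∃ w ∈ F, w <:+: (List.ofFn a1 ++ List.ofFn b)) ↔
      (∃ w ∈ F, w <:+: (List.ofFn a2 ++ List.ofFn b)) :=
    ⟨key n F a1 a2 h1 (fun p hp => (hpre p hp).mp) b,
     key n F a2 a1 h2 (fun p hp => (hpre p hp).mpr) b⟩
  exact ⟨hiff, by simp only [markovMat]; rw [if_congr hiff rfl rfl]⟩
end
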